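/- For any biquaternion Q with nonzero norm N(Q) = Q·conj(Q) ∈ ℂ \ {0}, there exist a complex number c, a real quaternion R with ‖R‖ = 1, and a bireal biquaternion B with B·conj(B) = 1, such that Q = c·R·B. -/

import Mathlib

/-- Embedding of the real quaternions into the biquaternions (complexified quaternions). -/
noncomputable def toB (q : Quaternion ℝ) : Quaternion ℂ :=
  ⟨(q.re : ℂ), (q.imI : ℂ), (q.imJ : ℂ), (q.imK : ℂ)⟩

/-- Componentwise complex (imaginary) conjugation of a biquaternion. -/
noncomputable def cstar (q : Quaternion ℂ) : Quaternion ℂ :=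
  ⟨star q.re, star q.imI, star q.imJ, star q.imK⟩

/-- Biconjugation: quaternion conjugation composed with complex conjugation. -/
noncomputable def biconj (q : Quaternion ℂ) : Quaternion ℂ := cstar (star q)

/-!
Dividing `Q` by a square root of `N(Q)` reduces to `N(U) = 1`. Write `U = A + i b` with `A`, `b`
real quaternions; then `N(U) = |A|² - |b|² + 2i⟨A, b⟩`, so `|A| ≥ 1` and `A ⊥ b`. With
`R = A / |A|`, the factor `B = R̄ U = |A| + i R̄ b` is bireal because `⟨A, b⟩ = 0` makes `R̄ b` a pure
quaternion.
-/

open Quaternion Complex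

section toB
variable (q : ℍ[ℝ])
@[simp] theorem re_toB : (toB q).re = q.re := rfl
@[simp] theorem imI_toB : (toB q).imI = q.imI := rfl
@[simp] theorem imJ_toB : (toB q).imJ = q.imJ := rfl
@[simp] theorem imK_toB : (toB q).imK = q.imK := rfl
end toB

theorem toB_mul (p q : ℍ[ℝ]) : toB (p * q) = toB p * toB q := by
  ext <;> simp

theorem toB_neg (q : ℍ[ℝ]) : toB (-q) = -toB q := by
  ext <;> simp

theorem toB_star (q : ℍ[ℝ]) : toB (star q) = star (toB q) := by
  ext <;> simp

theorem normSq_toB (q : ℍ[ℝ]) : normSq (toB q) = normSq q := by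
  simp [normSq_def']

def realQuat (U : ℍ[ℂ]) : ℍ[ℝ] := ⟨U.re.re, U.imI.re, U.imJ.re, U.imK.re⟩
def imagQuat (U : ℍ[ℂ]) : ℍ[ℝ] := ⟨U.re.im, U.imI.im, U.imJ.im, U.imK.im⟩

theorem toB_realQuat_add_I_smul_toB_imagQuat (U : ℍ[ℂ]) :
    toB (realQuat U) + I • toB (imagQuat U) = U := by
  ext <;> simp [Complex.ext_iff] <;> exact ⟨rfl, rfl⟩

theorem normSq_toB_add_I_smul_toB (p q : ℍ[ℝ]) :
    normSq (toB p + I • toB q) = ⟨normSq p - normSq q, 2 * (star p * q).re⟩ := by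
  apply Complex.ext <;> simp [normSq_def', pow_two] <;> ring

theorem biconj_toB_add_I_smul_toB (p q : ℍ[ℝ]) :
    biconj (toB p + I • toB q) = toB (star p) - I • toB (star q) := by
  ext <;> simp [biconj, cstar, Complex.ext_iff]

theorem biconj_toB_coe_add_I_smul_toB {x : ℝ} {q : ℍ[ℝ]} (hq : q.re = 0) :
    biconj (toB x + I • toB q) = toB x + I • toB q := by
  rw [biconj_toB_add_I_smul_toB, star_coe, star_eq_neg.mpr hq, toB_neg, smul_neg, sub_neg_eq_add]

theorem star_toB_mul_toB_add_I_smul_toB (r p q : ℍ[ℝ]) :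
    star (toB r) * (toB p + I • toB q) = toB (star r * p) + I • toB (star r * q) := by
  have hI : star (toB r) * (I • toB q) = I • (star (toB r) * toB q) := Algebra.mul_smul_comm _ _ _
  rw [mul_add, hI, ← toB_star, toB_mul, toB_mul]

theorem exists_polar_decomposition_of_normSq_eq_one {U : ℍ[ℂ]} (hU : normSq U = 1) :
    ∃ (R : ℍ[ℝ]) (B : ℍ[ℂ]), ‖R‖ = 1 ∧ biconj B = B ∧ B * star B = 1 ∧ U = toB R * B := by
  set A := realQuat U
  set b := imagQuat U
  have hAb : toB A + I • toB b = U := toB_realQuat_add_I_smul_toB_imagQuat U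
  obtain ⟨hnorm, horth⟩ : normSq A - normSq b = 1 ∧ 2 * (star A * b).re = 0 := by
    simpa [← hAb, normSq_toB_add_I_smul_toB, Complex.ext_iff] using hU
  have hA : A ≠ 0 := by
    intro h
    rw [h, map_zero] at hnorm
    linarith [(normSq_nonneg : 0 ≤ normSq b)]
  set R := ‖A‖⁻¹ • A
  have hR : ‖R‖ = 1 := norm_smul_inv_norm hA
  have hNR : normSq (toB R) = 1 := by
    rw [normSq_toB, normSq_eq_norm_mul_self, hR, mul_one, ofReal_one]
  have hRR : toB R * star (toB R) = 1 := by rw [self_mul_star, hNR, coe_one]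
  have hRR' : star (toB R) * toB R = 1 := by rw [star_mul_self, hNR, coe_one]
  have hUU : U * star U = 1 := by rw [self_mul_star, hU, coe_one]
  refine ⟨R, star (toB R) * U, hR, ?_, ?_, ?_⟩
  · rw [← hAb, star_toB_mul_toB_add_I_smul_toB]
    have hRA : star R * A = (‖A‖ : ℍ[ℝ]) := by
      rw [Quaternion.star_smul, smul_mul_assoc, star_mul_self, normSq_eq_norm_mul_self, smul_coe,
        inv_mul_cancel_left₀ (norm_ne_zero_iff.mpr hA)]
    rw [hRA]
    refine biconj_toB_coe_add_I_smul_toB ?_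
    rw [Quaternion.star_smul, smul_mul_assoc, re_smul, (by linarith : (star A * b).re = 0),
      smul_zero]
  · rw [star_mul, star_star, mul_assoc, ← mul_assoc U, hUU, one_mul, hRR']
  · rw [← mul_assoc, hRR, one_mul]

/-- Main decomposition theorem: every biquaternion with nonzero norm N(Q) = Q·conj(Q)
factors as Q = c·R·B with c complex, R a real unit quaternion, and B bireal of norm 1. -/
theorem stmt19 (Q : Quaternion ℂ) (hQ : Q * star Q ≠ 0) :
    ∃ (c : ℂ) (R : Quaternion ℝ) (B : Quaternion ℂ),
      ‖R‖ = 1 ∧ biconj B = B ∧ B * star B = 1 ∧ Q = c • (toB R * B) := by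
  have hN : normSq Q ≠ 0 := by
    rwa [self_mul_star, Ne, ← coe_zero, coe_inj] at hQ
  obtain ⟨c, hc⟩ := IsAlgClosed.exists_pow_nat_eq (normSq Q) two_pos
  have hc0 : c ≠ 0 := by rintro rfl; exact hN (by simpa using hc.symm)
  have hU : normSq (c⁻¹ • Q) = 1 := by
    rw [normSq_smul, ← hc, inv_pow, inv_mul_cancel₀ (pow_ne_zero 2 hc0)]
  obtain ⟨R, B, hR, hB, hBB, hRB⟩ := exists_polar_decomposition_of_normSq_eq_one hU
  exact ⟨c, R, B, hR, hB, hBB, by rw [← hRB, smul_inv_smul₀ hc0]⟩
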